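/- arXiv:1407.1362 — 8 statements merged into one kernel-verified Lean document; each statement's English description precedes it below -/
import Mathlib

section
/- Let M be a quasi-injective right module over a ring R. Then the Jacobson radical of End(M) consists exactly of those endomorphisms whose kernel is an essential (large) submodule of M, and this radical is closed in the finite topology on End(M). -/
/-- A module is quasi-injective if every homomorphism from a submodule into the module
extends to an endomorphism of the whole module. -/
def QuasiInjective (R M : Type*) [Ring R] [AddCommGroup M] [Module R M] : Prop :=
  ∀ (N : Submodule R M) (f : N →ₗ[R] M), ∃ g : M →ₗ[R] M, ∀ x : N, g x = f x

/-- A submodule is essential (large) if it meets every nonzero submodule nontrivially. -/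
def IsEssentialSubmodule {R M : Type*} [Ring R] [AddCommGroup M] [Module R M]
    (N : Submodule R M) : Prop :=
  ∀ P : Submodule R M, P ≠ ⊥ → N ⊓ P ≠ ⊥

/-- The finite topology on the endomorphism ring: induced by the inclusion into
`M → M` where `M` carries the discrete topology. -/
def finTopModEnd (R M : Type*) [Ring R] [AddCommGroup M] [Module R M] :
    TopologicalSpace (Module.End R M) :=
  TopologicalSpace.induced (fun f => (f : M → M))
    (@Pi.topologicalSpace M (fun _ => M) (fun _ => ⊥))

section Aux

variable {R M : Type*} [Ring R] [AddCommGroup M] [Module R M]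

lemma essential_mono {N N' : Submodule R M} (h : N ≤ N')
    (hN : IsEssentialSubmodule N) : IsEssentialSubmodule N' := by
  intro P hP hbot
  refine hN P hP (le_bot_iff.mp ?_)
  calc N ⊓ P ≤ N' ⊓ P := inf_le_inf_right P h
    _ = ⊥ := hbot

lemma inj_add_one_of_ess_ker {γ : Module.End R M}
    (h : IsEssentialSubmodule (LinearMap.ker γ)) :
    Function.Injective (γ + 1 : Module.End R M) := by
  rw [← LinearMap.ker_eq_bot]
  by_contra hk
  obtain ⟨x, hx, hx0⟩ := (Submodule.ne_bot_iff _).mp hk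
  rw [LinearMap.mem_ker] at hx
  have hγx : γ x = -x := by
    have h1 : γ x + x = 0 := by simpa using hx
    exact eq_neg_of_add_eq_zero_left h1
  have hspan : Submodule.span R {x} ≠ ⊥ := by
    simpa [Submodule.span_singleton_eq_bot] using hx0
  obtain ⟨y, hy, hy0⟩ := (Submodule.ne_bot_iff _).mp (h _ hspan)
  obtain ⟨hyk, hys⟩ := Submodule.mem_inf.mp hy
  obtain ⟨r, hr⟩ := Submodule.mem_span_singleton.mp hys
  rw [LinearMap.mem_ker] at hyk
  apply hy0
  have : γ y = -y := by rw [← hr, map_smul, hγx, smul_neg]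
  rw [hyk] at this
  simpa using this.symm

lemma left_inverse_of_injective (hQI : QuasiInjective R M) {f : Module.End R M}
    (hf : Function.Injective f) : ∃ g : Module.End R M, g * f = 1 := by
  let e := LinearEquiv.ofInjective (f : M →ₗ[R] M) hf
  obtain ⟨g, hg⟩ := hQI (LinearMap.range f) e.symm.toLinearMap
  refine ⟨g, LinearMap.ext fun x => ?_⟩
  have h1 := hg (e x)
  have h2 : ((e x : LinearMap.range f) : M) = f x := rfl
  have h3 : e.symm (e x) = x := e.symm_apply_apply x
  simp only [LinearEquiv.coe_coe] at h1
  rw [h2] at h1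
  simp only [Module.End.mul_apply, Module.End.one_apply]
  rw [h1, h3]

end Aux

theorem jacobson_of_quasiInjective_eq_essential_ker_and_isClosed
    {R M : Type*} [Ring R] [AddCommGroup M] [Module R M]
    (hQI : QuasiInjective R M) :
    (∀ α : Module.End R M,
        α ∈ (⊥ : Ideal (Module.End R M)).jacobson ↔
          IsEssentialSubmodule (LinearMap.ker α)) ∧
    @IsClosed _ (finTopModEnd R M)
      ((⊥ : Ideal (Module.End R M)).jacobson : Set (Module.End R M)) := by
  have hiff : ∀ α : Module.End R M,
      α ∈ (⊥ : Ideal (Module.End R M)).jacobson ↔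
        IsEssentialSubmodule (LinearMap.ker α) := by
    intro α
    constructor
    · -- α ∈ J → ker α essential
      intro hα P hP hbot
      -- α is injective on P
      have hinj : Function.Injective (α.comp P.subtype) := by
        rw [← LinearMap.ker_eq_bot, Submodule.eq_bot_iff]
        intro x hx
        have hxm : (x : M) ∈ LinearMap.ker α ⊓ P := by
          refine Submodule.mem_inf.mpr ⟨?_, x.2⟩
          simpa [LinearMap.mem_ker] using hx
        rw [hbot, Submodule.mem_bot] at hxm
        exact Subtype.ext hxm
      let e := LinearEquiv.ofInjective (α.comp P.subtype) hinj
      obtain ⟨β, hβ⟩ := hQI (LinearMap.range (α.comp P.subtype))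
        (P.subtype.comp e.symm.toLinearMap)
      have hβα : ∀ x : P, β (α (x : M)) = (x : M) := by
        intro x
        have h1 := hβ (e x)
        have h2 : ((e x : LinearMap.range (α.comp P.subtype)) : M) = α (x : M) := rfl
        have h3 : e.symm (e x) = x := e.symm_apply_apply x
        simp only [LinearMap.coe_comp, Function.comp_apply, LinearEquiv.coe_coe] at h1
        rw [h2, h3] at h1
        exact h1
      obtain ⟨z, hz⟩ := Ideal.mem_jacobson_iff.mp hα (-β)
      rw [Ideal.mem_bot] at hz
      -- P = ⊥, contradicting hP
      apply hP
      rw [Submodule.eq_bot_iff]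
      intro p hp
      have happ := congrArg (fun φ : Module.End R M => φ p) hz
      simp only [LinearMap.sub_apply, LinearMap.add_apply, Module.End.mul_apply,
        LinearMap.neg_apply, Module.End.one_apply, LinearMap.zero_apply] at happ
      have hbp : β (α p) = p := hβα ⟨p, hp⟩
      rw [hbp] at happ
      simp only [map_neg] at happ
      have h0 : -p = 0 := by rw [← happ]; abel
      simpa using h0
    · -- ker α essential → α ∈ J
      intro hess
      rw [Ideal.mem_jacobson_iff]
      intro y
      have hker : LinearMap.ker α ≤ LinearMap.ker (y * α) := by
        intro m hm
        rw [LinearMap.mem_ker] at hm ⊢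
        simp [Module.End.mul_apply, hm]
      have hessγ : IsEssentialSubmodule (LinearMap.ker (y * α)) :=
        essential_mono hker hess
      obtain ⟨z, hz⟩ := left_inverse_of_injective hQI (inj_add_one_of_ess_ker hessγ)
      refine ⟨z, ?_⟩
      rw [Ideal.mem_bot, sub_eq_zero]
      rw [mul_add, mul_one, ← mul_assoc] at hz
      exact hz
  refine ⟨hiff, ?_⟩
  letI : TopologicalSpace M := ⊥
  haveI : DiscreteTopology M := ⟨rfl⟩
  letI tE : TopologicalSpace (Module.End R M) := finTopModEnd R M
  rw [← isOpen_compl_iff]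
  -- the complement is the preimage of an open set of functions
  have hset : ((⊥ : Ideal (Module.End R M)).jacobson : Set (Module.End R M))ᶜ =
      (fun f : Module.End R M => (f : M → M)) ⁻¹'
        (⋃ (x : M) (_ : x ≠ 0) (c : M)
          (_ : ∀ r : R, r • c = 0 → r • x = 0), (fun f : M → M => f x) ⁻¹' {c}) := by
    ext α
    simp only [Set.mem_compl_iff, SetLike.mem_coe, hiff α, Set.mem_preimage,
      Set.mem_iUnion, Set.mem_singleton_iff]
    constructor
    · intro hness
      rw [IsEssentialSubmodule] at hness
      push_neg at hness
      obtain ⟨P, hP, hPbot⟩ := hness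
      obtain ⟨x, hxP, hx0⟩ := (Submodule.ne_bot_iff _).mp hP
      refine ⟨x, hx0, α x, fun r hr => ?_, rfl⟩
      have hm : r • x ∈ LinearMap.ker α ⊓ P := by
        refine Submodule.mem_inf.mpr ⟨?_, P.smul_mem r hxP⟩
        rw [LinearMap.mem_ker, map_smul, hr]
      rwa [hPbot, Submodule.mem_bot] at hm
    · rintro ⟨x, hx0, c, hc, hαx⟩
      intro hess
      have hspan : Submodule.span R {x} ≠ ⊥ := by
        simpa [Submodule.span_singleton_eq_bot] using hx0
      refine hess _ hspan ?_
      rw [Submodule.eq_bot_iff]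
      intro y hy
      obtain ⟨hyk, hys⟩ := Submodule.mem_inf.mp hy
      obtain ⟨r, hr⟩ := Submodule.mem_span_singleton.mp hys
      rw [LinearMap.mem_ker] at hyk
      rw [← hr]
      refine hc r ?_
      rw [← hαx, ← map_smul, hr, hyk]
  rw [hset]
  refine isOpen_induced ?_
  refine isOpen_iUnion fun x => isOpen_iUnion fun _ => ?_
  refine isOpen_iUnion fun c => isOpen_iUnion fun _ => ?_
  exact (continuous_apply x).isOpen_preimage _ (isOpen_discrete _)
end

section
/- Let p be a prime, m < n natural numbers, and A = ℤ/p^m ⊕ ℤ/p^n. Let τ : ℤ/p^m → ℤ/p^n be an injective homomorphism with image p^(n-m)·(ℤ/p^n), and define α ∈ End(A) by α(x, y) = (0, τ(x)). Then α lies in the Jacobson radical of End(A). -/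
theorem shift_mem_jacobson (p m n : ℕ) (hp : p.Prime) (hmn : m < n)
    (τ : ZMod (p ^ m) →+ ZMod (p ^ n)) (hτ : Function.Injective τ)
    (hτrange : Set.range τ =
      Set.range (fun y : ZMod (p ^ n) => (p : ZMod (p ^ n)) ^ (n - m) * y))
    (α : AddMonoid.End (ZMod (p ^ m) × ZMod (p ^ n)))
    (hα : ∀ (x : ZMod (p ^ m)) (y : ZMod (p ^ n)), α (x, y) = (0, τ x)) :
    α ∈ (⊥ : Ideal (AddMonoid.End (ZMod (p ^ m) × ZMod (p ^ n)))).jacobson := by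
  have hrange : ∀ x : ZMod (p ^ m), ∃ t, τ x = (p : ZMod (p ^ n)) ^ (n - m) * t := by
    intro x
    have : τ x ∈ Set.range τ := ⟨x, rfl⟩
    rw [hτrange] at this
    obtain ⟨t, ht⟩ := this
    exact ⟨t, ht.symm⟩
  have hαapp : ∀ a : ZMod (p ^ m) × ZMod (p ^ n), α a = (0, τ a.1) := by
    intro a; rw [← hα a.1 a.2]
  have hmul : ∀ (f g : AddMonoid.End (ZMod (p ^ m) × ZMod (p ^ n))) a,
      (f * g) a = f (g a) := fun _ _ _ => rfl
  rw [Ideal.mem_jacobson_iff]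
  intro y
  set β : AddMonoid.End (ZMod (p ^ m) × ZMod (p ^ n)) := α * y with hβ
  have key : ∀ k : ℕ, ∀ a, ∃ v, (β ^ (k + 1)) a =
      ((0 : ZMod (p ^ m)), (p : ZMod (p ^ n)) ^ (k * (n - m)) * v) := by
    intro k
    induction k with
    | zero =>
      intro a
      refine ⟨τ (y a).1, ?_⟩
      rw [pow_one, hβ, hmul, hαapp]
      simp
    | succ k ih =>
      intro a
      obtain ⟨v, hv⟩ := ih a
      obtain ⟨t, ht⟩ := hrange (y (0, v)).1
      refine ⟨t, ?_⟩
      have h1 : (β ^ (k + 1 + 1)) a = β ((β ^ (k + 1)) a) := by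
        rw [pow_succ']; exact hmul _ _ _
      rw [h1, hv]
      have h2 : ((0 : ZMod (p ^ m)), (p : ZMod (p ^ n)) ^ (k * (n - m)) * v)
          = (p ^ (k * (n - m)) : ℕ) • ((0 : ZMod (p ^ m)), v) := by
        simp [Prod.smul_def, nsmul_eq_mul]
      rw [h2, map_nsmul]
      have h3 : β ((0 : ZMod (p ^ m)), v) = (0, (p : ZMod (p ^ n)) ^ (n - m) * t) := by
        rw [hβ, hmul, hαapp, ht]
      rw [h3, Prod.smul_def]
      refine Prod.ext (by simp) ?_
      show (p ^ (k * (n - m)) : ℕ) • ((p : ZMod (p ^ n)) ^ (n - m) * t) = _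
      rw [nsmul_eq_mul]
      push_cast
      rw [← mul_assoc, ← pow_add]
      congr 2
      ring
  have hnil : IsNilpotent β := by
    refine ⟨n + 1, ?_⟩
    refine AddMonoidHom.ext fun a => ?_
    obtain ⟨v, hv⟩ := key n a
    have hz : (p : ZMod (p ^ n)) ^ (n * (n - m)) = 0 := by
      have h0 : ((p ^ (n * (n - m)) : ℕ) : ZMod (p ^ n)) = 0 := by
        rw [ZMod.natCast_eq_zero_iff]
        exact pow_dvd_pow p (Nat.le_mul_of_pos_right n (by omega))
      push_cast at h0
      exact h0
    show (β ^ (n + 1)) a = 0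
    rw [hv, hz, zero_mul]
    rfl
  have comm : ∀ k : ℕ, (y * α) ^ (k + 1) = y * (α * y) ^ k * α := by
    intro k
    induction k with
    | zero => simp [pow_succ, mul_assoc]
    | succ k ih =>
      rw [pow_succ, ih, pow_succ]
      noncomm_ring
  have hnil' : IsNilpotent (y * α) := by
    obtain ⟨k, hk⟩ := hnil
    have hk1 : β ^ (k + 1) = 0 := by rw [pow_succ, hk, zero_mul]
    refine ⟨k + 1 + 1, ?_⟩
    rw [comm, ← hβ, hk1, mul_zero, zero_mul]
  have hu : IsUnit (1 + y * α) := hnil'.isUnit_one_add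
  obtain ⟨u, hu'⟩ := hu
  refine ⟨↑u⁻¹, ?_⟩
  have heq : (↑u⁻¹ : AddMonoid.End (ZMod (p ^ m) × ZMod (p ^ n))) * y * α + ↑u⁻¹ - 1
      = ↑u⁻¹ * (1 + y * α) - 1 := by noncomm_ring
  rw [heq, ← hu', u.inv_mul, sub_self]
  exact Submodule.zero_mem _
end

section
/- Let p be a prime, m < n, A = ℤ/p^m ⊕ ℤ/p^n, and let α ∈ End(A) satisfy α(A) ⊆ p^(n-m)·A. Then the left ideal (End A)·α is nilpotent; in particular α belongs to the Jacobson radical of End(A). -/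
/-!
Every element of the left ideal `(End A) α` maps `A` into `p^(n-m) A`, so a product of `n` of them
maps `A` into `p^(n(n-m)) A ⊆ p^n A = 0`. In particular each `β α` is nilpotent, so `1 + β α` is a
unit for every `β`, which characterises membership of `α` in the Jacobson radical.
-/

namespace AddMonoid.End

variable {M : Type*} [AddCommMonoid M]

def MapsIntoNsmul (k : ℕ) (f : AddMonoid.End M) : Prop :=
  ∀ a, ∃ b, f a = k • b

theorem MapsIntoNsmul.mul {j k : ℕ} {g f : AddMonoid.End M} (hg : MapsIntoNsmul j g)
    (hf : MapsIntoNsmul k f) : MapsIntoNsmul (j * k) (g * f) := fun a => by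
  obtain ⟨b, hb⟩ := hf a
  obtain ⟨c, hc⟩ := hg b
  exact ⟨c, by rw [coe_mul, Function.comp_apply, hb, map_nsmul, hc, mul_nsmul]⟩

theorem MapsIntoNsmul.mul_left {k : ℕ} {f : AddMonoid.End M} (hf : MapsIntoNsmul k f)
    (g : AddMonoid.End M) : MapsIntoNsmul k (g * f) := fun a => by
  obtain ⟨b, hb⟩ := hf a
  exact ⟨g b, by rw [coe_mul, Function.comp_apply, hb, map_nsmul]⟩

theorem MapsIntoNsmul.list_prod {k : ℕ} {l : List (AddMonoid.End M)}
    (hl : ∀ f ∈ l, MapsIntoNsmul k f) : MapsIntoNsmul (k ^ l.length) l.prod := by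
  induction l with
  | nil => exact fun a => ⟨a, by simp⟩
  | cons f l ih =>
    rw [List.prod_cons, List.length_cons, pow_succ']
    exact (hl f List.mem_cons_self).mul (ih fun g hg => hl g (List.mem_cons_of_mem f hg))

theorem MapsIntoNsmul.eq_zero {k : ℕ} {f : AddMonoid.End M} (hf : MapsIntoNsmul k f)
    (hk : ∀ x : M, k • x = 0) : f = 0 := by
  ext a
  obtain ⟨b, hb⟩ := hf a
  rw [hb, hk, zero_apply]

theorem prod_ofFn_mul_eq_zero_of_mapsIntoNsmul {k N : ℕ} (hk : ∀ x : M, k ^ N • x = 0)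
    {α : AddMonoid.End M} (hα : MapsIntoNsmul k α) (β : Fin N → AddMonoid.End M) :
    (List.ofFn fun i => β i * α).prod = 0 := by
  have hprod := MapsIntoNsmul.list_prod (l := List.ofFn fun i => β i * α) (k := k) <| by
    simp only [List.forall_mem_ofFn_iff]
    exact fun i => hα.mul_left (β i)
  rw [List.length_ofFn] at hprod
  exact hprod.eq_zero hk

end AddMonoid.End

theorem Ideal.mem_jacobson_bot_of_forall_isNilpotent_mul {R : Type*} [Ring R] {x : R}
    (h : ∀ y, IsNilpotent (y * x)) : x ∈ (⊥ : Ideal R).jacobson :=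
  Ideal.mem_jacobson_iff.2 fun y => by
    obtain ⟨u, hu⟩ := (h y).isUnit_add_one
    refine ⟨↑u⁻¹, ?_⟩
    rw [mem_bot, mul_assoc, ← mul_add_one, ← hu, Units.inv_mul, sub_self]

theorem ZMod.nsmul_eq_zero_of_dvd {d k : ℕ} (h : d ∣ k) (x : ZMod d) : k • x = 0 := by
  rw [nsmul_eq_mul, (ZMod.natCast_eq_zero_iff k d).2 h, zero_mul]

open AddMonoid.End in
theorem leftIdeal_nilpotent_of_range_le_smul_general (p m n : ℕ) (hmn : m < n)
    (α : AddMonoid.End (ZMod (p ^ m) × ZMod (p ^ n)))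
    (hα : ∀ a : ZMod (p ^ m) × ZMod (p ^ n),
      ∃ b : ZMod (p ^ m) × ZMod (p ^ n), α a = p ^ (n - m) • b) :
    (∃ N : ℕ, 1 ≤ N ∧
      ∀ β : Fin N → AddMonoid.End (ZMod (p ^ m) × ZMod (p ^ n)),
        (List.ofFn (fun i => β i * α)).prod = 0) ∧
    α ∈ (⊥ : Ideal (AddMonoid.End (ZMod (p ^ m) × ZMod (p ^ n)))).jacobson := by
  have hn : n ≤ (n - m) * n := Nat.le_mul_of_pos_left n (by omega)
  have hkill : ∀ x : ZMod (p ^ m) × ZMod (p ^ n), (p ^ (n - m)) ^ n • x = 0 := fun x => by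
    rw [← pow_mul]
    exact Prod.ext (ZMod.nsmul_eq_zero_of_dvd (pow_dvd_pow p (by omega)) x.1)
      (ZMod.nsmul_eq_zero_of_dvd (pow_dvd_pow p hn) x.2)
  have hprod := prod_ofFn_mul_eq_zero_of_mapsIntoNsmul hkill hα
  refine ⟨⟨n, by omega, hprod⟩, Ideal.mem_jacobson_bot_of_forall_isNilpotent_mul fun β => ?_⟩
  have := hprod fun _ => β
  rw [List.ofFn_const, List.prod_replicate] at this
  exact ⟨n, this⟩

theorem leftIdeal_nilpotent_of_range_le_smul (p m n : ℕ) (hp : p.Prime) (hmn : m < n)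
    (α : AddMonoid.End (ZMod (p ^ m) × ZMod (p ^ n)))
    (hα : ∀ a : ZMod (p ^ m) × ZMod (p ^ n),
      ∃ b : ZMod (p ^ m) × ZMod (p ^ n), α a = p ^ (n - m) • b) :
    (∃ N : ℕ, 1 ≤ N ∧
      ∀ β : Fin N → AddMonoid.End (ZMod (p ^ m) × ZMod (p ^ n)),
        (List.ofFn (fun i => β i * α)).prod = 0) ∧
    α ∈ (⊥ : Ideal (AddMonoid.End (ZMod (p ^ m) × ZMod (p ^ n)))).jacobson :=
  leftIdeal_nilpotent_of_range_le_smul_general p m n hmn α hα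
end

section
/- Let p be a prime, n ≥ 1, and let A be a direct sum of copies of ℤ/p^n (over an arbitrary index set Ω). Then the Jacobson radical of End(A) equals p·End(A), and J(End A)^n = 0. -/
/-!
Since `p ^ n` kills `A`, the central element `p` of `End A` is nilpotent, so every `p • g` lies in
the radical and a product of `n` of them vanishes. Conversely, let `f` be in the radical and
suppose some coordinate `c = π (f x)` is a unit. For `e z := π z • x` one gets `(c⁻¹ e) f e = e`,
and `1 - (c⁻¹ e) f` has a left inverse, so `e = 0` and hence `x = 0`. Thus all coordinates of
values of `f` are non-units of `ZMod (p ^ n)`, i.e. multiples of `p`, so `f` maps into `p A`;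
as `A` is a projective `ZMod (p ^ n)`-module, `f` lifts through multiplication by `p`.
-/

open DirectSum

section Jacobson

variable {R : Type*} [Ring R]

theorem eq_zero_of_mul_mul_eq_self_of_mem_jacobson_bot {f : R}
    (hf : f ∈ (⊥ : Ideal R).jacobson) {y e : R} (h : y * f * e = e) : e = 0 := by
  obtain ⟨z, hz⟩ := Ideal.mem_jacobson_iff.mp hf (-y)
  have hz' : z * (1 - y * f) = 1 := by
    rw [Ideal.mem_bot, sub_eq_zero] at hz
    calc z * (1 - y * f) = z * -y * f + z := by noncomm_ring
      _ = 1 := hz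
  calc e = z * (1 - y * f) * e := by rw [hz', one_mul]
    _ = z * (e - y * f * e) := by noncomm_ring
    _ = 0 := by rw [h, sub_self, mul_zero]

theorem nsmul_mem_jacobson_bot_of_isNilpotent {c : ℕ} (hc : IsNilpotent (c : R)) (g : R) :
    c • g ∈ (⊥ : Ideal R).jacobson := by
  refine Ideal.mem_jacobson_iff.mpr fun y => ?_
  have hnil : IsNilpotent (y * (c • g)) := by
    rw [nsmul_eq_mul, ← mul_assoc, ← (Nat.cast_commute c y).eq, mul_assoc]
    exact (Nat.cast_commute c _).isNilpotent_mul_right hc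
  obtain ⟨u, hu⟩ := hnil.isUnit_add_one
  refine ⟨↑u⁻¹, ?_⟩
  rw [Ideal.mem_bot, mul_assoc, sub_eq_zero, ← mul_add_one, ← hu, Units.inv_mul]

end Jacobson

theorem List.exists_prod_eq_pow_smul {S M : Type*} [Monoid S] [Monoid M] [MulAction S M]
    [IsScalarTower S M M] [SMulCommClass S M M] (c : S) (l : List M)
    (h : ∀ f ∈ l, ∃ g, f = c • g) : ∃ g, l.prod = c ^ l.length • g := by
  induction l with
  | nil => exact ⟨1, by simp⟩
  | cons f l ih =>
    obtain ⟨g, rfl⟩ := h f List.mem_cons_self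
    obtain ⟨g', hg'⟩ := ih fun f hf => h f (List.mem_cons_of_mem _ hf)
    refine ⟨g * g', ?_⟩
    rw [List.prod_cons, hg', List.length_cons, smul_mul_assoc, mul_smul_comm, smul_smul, pow_succ']

theorem LinearMap.exists_comp_eq_of_range_le {R P M N : Type*} [Ring R] [AddCommGroup P]
    [Module R P] [Module.Projective R P] [AddCommGroup M] [Module R M] [AddCommGroup N] [Module R N]
    (f : P →ₗ[R] N) (g : M →ₗ[R] N) (h : range f ≤ range g) : ∃ k : P →ₗ[R] M, g ∘ₗ k = f := by
  obtain ⟨k, hk⟩ := Module.projective_lifting_property g.rangeRestrict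
    (f.codRestrict _ fun x => h ⟨x, rfl⟩) g.surjective_rangeRestrict
  exact ⟨k, LinearMap.ext fun x => congr_arg Subtype.val (LinearMap.congr_fun hk x)⟩

theorem DirectSum.exists_eq_nsmul_of_forall_dvd {ι R : Type*} [Semiring R] {c : ℕ}
    (x : ⨁ _ : ι, R) (hx : ∀ i, (c : R) ∣ x i) : ∃ y, x = c • y := by
  classical
  suffices x ∈ AddMonoidHom.mrange (DistribSMul.toAddMonoidHom (⨁ _ : ι, R) c) by
    obtain ⟨y, hy⟩ := this
    exact ⟨y, hy.symm⟩
  rw [← DirectSum.sum_support_of x]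
  refine AddSubmonoid.sum_mem _ fun i _ => ?_
  obtain ⟨d, hd⟩ := hx i
  exact ⟨of _ i d, by simp [hd, ← nsmul_eq_mul]⟩

theorem ZMod.natCast_dvd_of_not_isUnit {p n : ℕ} (hp : p.Prime) {c : ZMod (p ^ n)}
    (hc : ¬IsUnit c) : (p : ZMod (p ^ n)) ∣ c := by
  have : NeZero (p ^ n) := ⟨pow_ne_zero n hp.ne_zero⟩
  rw [← ZMod.natCast_zmod_val c, ZMod.isUnit_iff_coprime] at hc
  obtain ⟨d, hd⟩ := hp.dvd_iff_not_coprime.mpr fun h => hc (h.symm.pow_right n)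
  rw [← ZMod.natCast_zmod_val c, hd, Nat.cast_mul]
  exact dvd_mul_right _ _

namespace AddMonoid.End

variable {m : ℕ} {A : Type*} [AddCommGroup A] [Module (ZMod m) A]

variable (m) in
theorem char_nsmul_eq_zero (g : AddMonoid.End A) : m • g = 0 :=
  AddMonoidHom.ext fun x => ZModModule.char_nsmul_eq_zero m (g x)

theorem eq_zero_of_isUnit_apply_of_mem_jacobson {f : AddMonoid.End A}
    (hf : f ∈ (⊥ : Ideal (AddMonoid.End A)).jacobson) (π : A →+ ZMod m) {x : A}
    (hx : IsUnit (π (f x))) : x = 0 := by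
  let e : AddMonoid.End A := (LinearMap.toSpanSingleton (ZMod m) A x).toAddMonoidHom.comp π
  have he : ((↑hx.unit⁻¹ : ZMod m) • e) * f * e = e := by
    ext z
    change (↑hx.unit⁻¹ : ZMod m) • (π (f (π z • x)) • x) = π z • x
    rw [ZMod.map_smul, ZMod.map_smul, smul_smul, smul_eq_mul, mul_left_comm, IsUnit.val_inv_mul,
      mul_one]
  have hfx : π (f x) • x = 0 :=
    DFunLike.congr_fun (eq_zero_of_mul_mul_eq_self_of_mem_jacobson_bot hf he) (f x)
  exact hx.smul_eq_zero.mp hfx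

theorem exists_eq_nsmul_of_forall_exists_eq_nsmul [Module.Projective (ZMod m) A] {c : ℕ}
    (f : AddMonoid.End A) (hf : ∀ x, ∃ y, f x = c • y) : ∃ g : AddMonoid.End A, f = c • g := by
  obtain ⟨k, hk⟩ := (f.toZModLinearMap m).exists_comp_eq_of_range_le (c • LinearMap.id) <| by
    rintro _ ⟨x, rfl⟩
    obtain ⟨y, hy⟩ := hf x
    exact ⟨y, hy.symm⟩
  exact ⟨k.toAddMonoidHom, AddMonoidHom.ext fun x => (LinearMap.congr_fun hk x).symm⟩

theorem exists_eq_nsmul_of_mem_jacobson {p n : ℕ} (hp : p.Prime) {Ω : Type*}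
    {f : AddMonoid.End (⨁ _ : Ω, ZMod (p ^ n))}
    (hf : f ∈ (⊥ : Ideal (AddMonoid.End (⨁ _ : Ω, ZMod (p ^ n)))).jacobson) :
    ∃ g : AddMonoid.End (⨁ _ : Ω, ZMod (p ^ n)), f = p • g := by
  refine exists_eq_nsmul_of_forall_exists_eq_nsmul (m := p ^ n) f fun x =>
    DirectSum.exists_eq_nsmul_of_forall_dvd (f x) fun α => ?_
  by_cases hunit : IsUnit (f x α)
  · rw [eq_zero_of_isUnit_apply_of_mem_jacobson hf (DFinsupp.evalAddMonoidHom α) hunit, map_zero]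
    exact dvd_zero _
  · exact ZMod.natCast_dvd_of_not_isUnit hp hunit

end AddMonoid.End

theorem jacobson_of_homogeneous_eq_p_smul_general (p n : ℕ) (hp : p.Prime)
    (Ω : Type*) :
    (∀ f : AddMonoid.End (⨁ _ : Ω, ZMod (p ^ n)),
      f ∈ (⊥ : Ideal (AddMonoid.End (⨁ _ : Ω, ZMod (p ^ n)))).jacobson ↔
        ∃ g : AddMonoid.End (⨁ _ : Ω, ZMod (p ^ n)), f = p • g) ∧
    (∀ l : List (AddMonoid.End (⨁ _ : Ω, ZMod (p ^ n))), l.length = n →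
      (∀ f ∈ l, f ∈ (⊥ : Ideal (AddMonoid.End (⨁ _ : Ω, ZMod (p ^ n)))).jacobson) →
      l.prod = 0) := by
  have mem_jacobson_iff (f : AddMonoid.End (⨁ _ : Ω, ZMod (p ^ n))) :
      f ∈ (⊥ : Ideal (AddMonoid.End (⨁ _ : Ω, ZMod (p ^ n)))).jacobson ↔
        ∃ g : AddMonoid.End (⨁ _ : Ω, ZMod (p ^ n)), f = p • g := by
    refine ⟨AddMonoid.End.exists_eq_nsmul_of_mem_jacobson hp, ?_⟩
    rintro ⟨g, rfl⟩
    refine nsmul_mem_jacobson_bot_of_isNilpotent ⟨n, ?_⟩ g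
    rw [← Nat.cast_pow, ← nsmul_one, AddMonoid.End.char_nsmul_eq_zero]
  refine ⟨mem_jacobson_iff, fun l hlen hl => ?_⟩
  obtain ⟨g, hg⟩ := l.exists_prod_eq_pow_smul p fun f hf => (mem_jacobson_iff f).mp (hl f hf)
  rw [hg, hlen, AddMonoid.End.char_nsmul_eq_zero]

theorem jacobson_of_homogeneous_eq_p_smul (p n : ℕ) (hp : p.Prime) (hn : 1 ≤ n)
    (Ω : Type*) :
    (∀ f : AddMonoid.End (⨁ _ : Ω, ZMod (p ^ n)),
      f ∈ (⊥ : Ideal (AddMonoid.End (⨁ _ : Ω, ZMod (p ^ n)))).jacobson ↔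
        ∃ g : AddMonoid.End (⨁ _ : Ω, ZMod (p ^ n)), f = p • g) ∧
    (∀ l : List (AddMonoid.End (⨁ _ : Ω, ZMod (p ^ n))), l.length = n →
      (∀ f ∈ l, f ∈ (⊥ : Ideal (AddMonoid.End (⨁ _ : Ω, ZMod (p ^ n)))).jacobson) →
      l.prod = 0) :=
  jacobson_of_homogeneous_eq_p_smul_general p n hp Ω
end

section
/- If A is a bounded abelian group (that is, nA = 0 for some positive integer n), then the Jacobson radical of End(A) is a nilpotent ideal. -/
/-!
Let `J` be the Jacobson radical of `End A` and `p` a prime. If `f ∈ J` and `p^(k+1) • b = 0`, then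
`p^k • f b ∈ p^(k+1) • A`: otherwise the image of `f b` in `A ⧸ p^(k+1) • A` has order `p^(k+1)`,
so self-injectivity of `ZMod (p^(k+1))` yields `g ∈ End A` with `g (f b) = b`, and left
invertibility of `1 - g * f` forces `b = 0`. Hence `f` maps `p^i • A[p^(i+j+1)]` into
`p^(i+1) • A[p^(i+j+2)] + p^i • A[p^(i+j)]`, and induction on `(E - i) + j`, where `p^E` bounds the
`p`-primary part of `A`, shows that products of `2E` elements of `J` kill `A[p^E]`. As `A` is the
sum of these primary parts, products of `2n` elements of `J` vanish.
-/

theorem ZMod.mem_span_singleton_of_annihilator_le {n : ℕ} [NeZero n] {d z : ZMod n}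
    (h : ∀ r : ZMod n, r * d = 0 → r * z = 0) : z ∈ Ideal.span {d} := by
  obtain ⟨a, rfl⟩ := ZMod.intCast_surjective d
  obtain ⟨c, rfl⟩ := ZMod.intCast_surjective z
  -- `m = n / gcd a n` kills `a`, hence `c`, so `gcd a n ∣ c`; and `gcd a n ≡ a * gcdA a n` mod `n`.
  obtain ⟨m, hm⟩ : (a.gcd n : ℤ) ∣ n := Int.gcd_dvd_right a n
  obtain ⟨s, hs⟩ : (a.gcd n : ℤ) ∣ a := Int.gcd_dvd_left a n
  have hm0 : m ≠ 0 := by rintro rfl; simp [NeZero.ne n] at hm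
  obtain ⟨t, ht⟩ : (a.gcd n : ℤ) ∣ c := by
    have hmc := h m <| by
      rw [← Int.cast_mul, ZMod.intCast_zmod_eq_zero_iff_dvd]
      exact ⟨s, by linear_combination m * hs - s * hm⟩
    rw [← Int.cast_mul, ZMod.intCast_zmod_eq_zero_iff_dvd, hm, mul_comm m] at hmc
    exact (mul_dvd_mul_iff_right hm0).mp hmc
  refine Ideal.mem_span_singleton'.mpr ⟨t * a.gcdA n, ?_⟩
  rw [ht, Int.gcd_eq_gcd_ab a n]
  push_cast
  rw [ZMod.natCast_self]
  ring

theorem ZMod.baer_self (n : ℕ) [NeZero n] : Module.Baer (ZMod n) (ZMod n) := by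
  intro I g
  have : IsPrincipalIdealRing (ZMod n) :=
    .of_surjective (Int.castRingHom (ZMod n)) ZMod.intCast_surjective
  obtain ⟨d, rfl⟩ := (IsPrincipalIdealRing.principal I).principal
  have hd : d ∈ Ideal.span {d} := Ideal.mem_span_singleton_self d
  obtain ⟨w, hw⟩ := Ideal.mem_span_singleton'.mp <|
    ZMod.mem_span_singleton_of_annihilator_le (d := d) (z := g ⟨d, hd⟩) fun r hr => by
      rw [← smul_eq_mul, ← map_smul, show r • (⟨d, hd⟩ : Ideal.span {d}) = 0 from Subtype.ext hr,
        map_zero]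
  refine ⟨LinearMap.toSpanSingleton _ _ w, fun x hx => ?_⟩
  obtain ⟨r, rfl⟩ := Ideal.mem_span_singleton'.mp hx
  have : (⟨r * d, hx⟩ : Ideal.span {d}) = r • ⟨d, hd⟩ := rfl
  rw [this, map_smul, ← hw, LinearMap.toSpanSingleton_apply, smul_eq_mul, smul_eq_mul]
  ring

theorem ZMod.exists_linearMap_apply_eq_one {Q : Type*} [AddCommGroup Q] {q : ℕ} [NeZero q]
    [Module (ZMod q) Q] {c : Q} (hc : addOrderOf c = q) : ∃ χ : Q →ₗ[ZMod q] ZMod q, χ c = 1 := by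
  have hinj : Function.Injective (LinearMap.toSpanSingleton (ZMod q) Q c) := by
    refine (injective_iff_map_eq_zero _).mpr fun r hr => ?_
    rw [LinearMap.toSpanSingleton_apply, ← ZMod.natCast_zmod_val r, Nat.cast_smul_eq_nsmul,
      ← addOrderOf_dvd_iff_nsmul_eq_zero, hc] at hr
    rw [← ZMod.val_eq_zero]
    exact Nat.eq_zero_of_dvd_of_lt hr (ZMod.val_lt r)
  obtain ⟨χ, hχ⟩ := (ZMod.baer_self q).extension_property _ hinj LinearMap.id
  exact ⟨χ, by simpa using DFunLike.congr_fun hχ 1⟩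

theorem AddMonoid.End.eq_zero_of_apply_eq_of_mem_jacobson {A : Type*} [AddCommGroup A]
    {f : AddMonoid.End A} (hf : f ∈ (⊥ : Ideal (AddMonoid.End A)).jacobson)
    (g : AddMonoid.End A) {b : A} (hb : g (f b) = b) : b = 0 := by
  obtain ⟨u, hu⟩ := Ideal.exists_mul_sub_mem_of_sub_one_mem_jacobson (1 - g * f) <| by
    simpa using neg_mem (Ideal.mul_mem_left _ g hf)
  have h := DFunLike.congr_fun (sub_eq_zero.mp ((Submodule.mem_bot _).mp hu)) b
  change u (b - g (f b)) = b at h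
  rwa [hb, sub_self, map_zero, eq_comm] at h

theorem AddMonoid.End.exists_apply_eq_of_addOrderOf_mk {A : Type*} [AddCommGroup A] {q : ℕ}
    [NeZero q] {c b : A} (hc : addOrderOf (c : A ⧸ (nsmulAddMonoidHom (α := A) q).range) = q)
    (hb : q • b = 0) : ∃ g : AddMonoid.End A, g c = b := by
  let := QuotientAddGroup.zmodModule (n := q) (H := (nsmulAddMonoidHom (α := A) q).range)
    fun x => ⟨x, rfl⟩
  obtain ⟨χ, hχ⟩ := ZMod.exists_linearMap_apply_eq_one hc
  let ℓ : ZMod q →+ A :=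
    ZMod.lift q ⟨zmultiplesHom A b, by rw [zmultiplesHom_apply, natCast_zsmul, hb]⟩
  refine ⟨ℓ.comp (χ.toAddMonoidHom.comp (QuotientAddGroup.mk' _)), ?_⟩
  change ℓ (χ.toAddMonoidHom c) = b
  rw [LinearMap.toAddMonoidHom_coe, hχ, ← Int.cast_one, ZMod.lift_coe]
  exact one_zsmul b

theorem AddMonoid.End.exists_pow_succ_smul_eq_of_mem_jacobson {A : Type*} [AddCommGroup A]
    {p : ℕ} (hp : p.Prime) {f : AddMonoid.End A}
    (hf : f ∈ (⊥ : Ideal (AddMonoid.End A)).jacobson) {k : ℕ} {b : A}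
    (hb : p ^ (k + 1) • b = 0) : ∃ z : A, p ^ (k + 1) • z = p ^ k • f b := by
  have := Fact.mk hp
  have := NeZero.of_pos (pow_pos hp.pos (k + 1))
  by_contra hfb
  have hc : addOrderOf (f b : A ⧸ (nsmulAddMonoidHom (α := A) (p ^ (k + 1))).range) =
      p ^ (k + 1) := by
    refine addOrderOf_eq_prime_pow ?_ ?_ <;>
      rw [← QuotientAddGroup.mk_nsmul, QuotientAddGroup.eq_zero_iff]
    exacts [hfb, ⟨f b, rfl⟩]
  obtain ⟨g, hg⟩ := exists_apply_eq_of_addOrderOf_mk hc hb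
  exact hfb ⟨0, by simp [eq_zero_of_apply_eq_of_mem_jacobson hf g hg]⟩

section JacobsonProducts

variable (A : Type*) [AddCommGroup A]

def jacobsonProdKer (m : ℕ) : AddSubgroup A where
  carrier := {a | ∀ l : List (AddMonoid.End A), l.length = m →
    (∀ f ∈ l, f ∈ (⊥ : Ideal (AddMonoid.End A)).jacobson) → l.prod a = 0}
  zero_mem' _ _ _ := map_zero _
  add_mem' ha hb l hlen hl := by rw [map_add, ha l hlen hl, hb l hlen hl, add_zero]
  neg_mem' ha l hlen hl := by rw [map_neg, ha l hlen hl, neg_zero]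

variable {A}

theorem jacobsonProdKer_mono : Monotone (jacobsonProdKer A) := by
  refine monotone_nat_of_le_succ fun m a ha l hlen hl => ?_
  obtain ⟨f, L, rfl⟩ := List.exists_cons_of_length_eq_add_one hlen
  change f (L.prod a) = 0
  rw [ha L (by simpa using hlen) fun g hg => hl g (List.mem_cons_of_mem f hg), map_zero]

theorem mem_jacobsonProdKer_succ {m : ℕ} {a : A}
    (h : ∀ f ∈ (⊥ : Ideal (AddMonoid.End A)).jacobson, f a ∈ jacobsonProdKer A m) :
    a ∈ jacobsonProdKer A (m + 1) := by
  intro l hlen hl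
  obtain ⟨L, f, rfl⟩ := (List.eq_nil_or_concat l).resolve_left (by rintro rfl; simp at hlen)
  simp only [List.concat_eq_append, List.length_append, List.length_singleton,
    Nat.add_right_cancel_iff, List.mem_append, List.mem_singleton] at hlen hl
  rw [List.concat_eq_append, List.prod_append, List.prod_singleton]
  exact h f (hl f (Or.inr rfl)) L hlen fun g hg => hl g (Or.inl hg)

theorem pow_smul_mem_jacobsonProdKer {p E : ℕ} (hp : p.Prime)
    (hE : ∀ (t : ℕ) (a : A), p ^ t • a = 0 → p ^ E • a = 0) :
    ∀ (i j : ℕ) {b : A}, p ^ (i + j) • b = 0 → p ^ i • b ∈ jacobsonProdKer A (E - i + j)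
  | i, 0, b, hb => by
    rw [add_zero] at hb
    rw [hb]
    exact zero_mem _
  | i, j + 1, b, hb => by
    by_cases hiE : E ≤ i
    · rw [← Nat.sub_add_cancel hiE, pow_add, mul_smul, hE _ b hb, smul_zero]
      exact zero_mem _
    have hm : E - (i + 1) + (j + 1) = E - i + j := by omega
    rw [show E - i + (j + 1) = E - i + j + 1 by omega]
    refine mem_jacobsonProdKer_succ fun f hf => ?_
    have hb' : p ^ (i + j + 1) • b = 0 := hb
    obtain ⟨z, hz⟩ := AddMonoid.End.exists_pow_succ_smul_eq_of_mem_jacobson hp hf hb'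
    have hf_eq : f (p ^ i • b) = p ^ (i + 1) • z + p ^ i • (f b - p • z) := by
      rw [map_nsmul, smul_sub, ← mul_smul, ← pow_succ]
      abel
    rw [hf_eq]
    refine add_mem ?_ (pow_smul_mem_jacobsonProdKer hp hE i j ?_)
    · rw [← hm]
      refine pow_smul_mem_jacobsonProdKer hp hE (i + 1) (j + 1) ?_
      rw [show i + 1 + (j + 1) = i + j + 1 + 1 by ring, pow_succ', mul_smul, hz, ← mul_smul,
        ← pow_succ', ← map_nsmul, hb', map_zero]
    · rw [smul_sub, ← mul_smul, ← pow_succ, hz, sub_self]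
termination_by i j => E - i + j

theorem mem_jacobsonProdKer_of_pow_smul_eq_zero {p E : ℕ} (hp : p.Prime)
    (hE : ∀ (t : ℕ) (a : A), p ^ t • a = 0 → p ^ E • a = 0) {a : A} (ha : p ^ E • a = 0) :
    a ∈ jacobsonProdKer A (2 * E) := by
  simpa [two_mul] using pow_smul_mem_jacobsonProdKer hp hE 0 E (by simpa using ha)

end JacobsonProducts

theorem pow_factorization_smul_eq_zero {A : Type*} [AddCommGroup A] {n p : ℕ} (hn : n ≠ 0)
    (hp : p.Prime) (hA : ∀ a : A, n • a = 0) (t : ℕ) (a : A) (ha : p ^ t • a = 0) :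
    p ^ n.factorization p • a = 0 := by
  obtain ⟨s, -, hs⟩ := (Nat.dvd_prime_pow hp).mp (addOrderOf_dvd_of_nsmul_eq_zero ha)
  rw [← addOrderOf_dvd_iff_nsmul_eq_zero, hs]
  exact pow_dvd_pow _ <| (hp.pow_dvd_iff_le_factorization hn).mp <|
    hs ▸ addOrderOf_dvd_of_nsmul_eq_zero (hA a)

theorem AddSubgroup.eq_top_of_forall_primeFactors {A : Type*} [AddCommGroup A] {n : ℕ}
    (hn : n ≠ 0) (hA : ∀ a : A, n • a = 0) (K : AddSubgroup A)
    (hK : ∀ p ∈ n.primeFactors, ∀ a : A, p ^ n.factorization p • a = 0 → a ∈ K) : K = ⊤ := by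
  have hcop : (n.primeFactors : Set ℕ).Pairwise
      (Function.onFun IsCoprime fun p => ((p ^ n.factorization p : ℕ) : ℤ)) := fun p hp q hq hpq =>
    Nat.isCoprime_iff_coprime.mpr <| Nat.coprime_pow_primes _ _
      (Nat.prime_of_mem_primeFactors hp) (Nat.prime_of_mem_primeFactors hq) hpq
  have hsup := Submodule.iSup_torsionBy_eq_torsionBy_prod (M := A) hcop
  rw [← Nat.cast_prod, ← Nat.prod_factorization_eq_prod_primeFactors,
    Nat.prod_factorization_pow_eq_self hn] at hsup
  rw [eq_top_iff, ← AddSubgroup.toIntSubmodule.le_iff_le, map_top]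
  calc ⊤ = Submodule.torsionBy ℤ A n := by
        ext a; simp [Submodule.mem_torsionBy_iff, natCast_zsmul, hA]
    _ = _ := hsup.symm
    _ ≤ _ := iSup₂_le fun p hp a ha => hK p hp a <| by
        rwa [Submodule.mem_torsionBy_iff, natCast_zsmul] at ha

theorem jacobson_nilpotent_of_bounded {A : Type*} [AddCommGroup A]
    (n : ℕ) (hn : 0 < n) (hbound : ∀ a : A, n • a = 0) :
    ∃ N : ℕ, 0 < N ∧ ∀ l : List (AddMonoid.End A), l.length = N →
      (∀ f ∈ l, f ∈ (⊥ : Ideal (AddMonoid.End A)).jacobson) → l.prod = 0 := by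
  refine ⟨2 * n, by omega, fun l hlen hl => ?_⟩
  have hker : jacobsonProdKer A (2 * n) = ⊤ :=
    AddSubgroup.eq_top_of_forall_primeFactors hn.ne' hbound _ fun p hp a ha =>
      jacobsonProdKer_mono (by have := Nat.factorization_lt p hn.ne'; omega) <|
        mem_jacobsonProdKer_of_pow_smul_eq_zero (Nat.prime_of_mem_primeFactors hp)
          (pow_factorization_smul_eq_zero hn.ne' (Nat.prime_of_mem_primeFactors hp) hbound) ha
  ext a
  exact (AddSubgroup.eq_top_iff' _).mp hker a l hlen hl
end

section
/- If A is a bounded abelian group, then the Jacobson radical of End(A) is closed in the finite topology on End(A). -/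
/-- The finite topology on the endomorphism ring of an abelian group: induced by the
inclusion into `A → A` where `A` carries the discrete topology. -/
def finTopEnd (A : Type*) [AddCommGroup A] : TopologicalSpace (AddMonoid.End A) :=
  TopologicalSpace.induced (fun f => (f : A → A))
    (@Pi.topologicalSpace A (fun _ => A) (fun _ => ⊥))

/-!
Write `J` for the Jacobson radical of `End(A)` and `f` for an endomorphism in the closure of `J`.
Since `f` agrees with some `g ∈ J` at any given point `a`, and `1 - g` has a left inverse `v`,
we get `v ((1 - f) a) = a`. Hence `1 - f` is injective and its range `B` is a pure subgroup of
`A`. As `A` is bounded, so is `B`, and a bounded pure subgroup is a direct summand (Kulikov):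
`A = B ⊕ E`. If `π` is the projection onto `E` along `B`, then `π f` again lies in the closure
of `J` (a left ideal), and `1 - π f` vanishes on `E`; by injectivity `E = 0`, so `1 - f` is
bijective. Applying this to every `h f` shows that `1 - h f` is left invertible for all `h`,
i.e. `f ∈ J`.
-/

open Pointwise

theorem exists_maximal_disjoint_of_le {α : Type*} [CompleteLattice α] [IsCompactlyGenerated α]
    {a b c : α} (hbc : b ≤ c) (hab : Disjoint a b) :
    ∃ x, Maximal (fun x => b ≤ x ∧ x ≤ c ∧ Disjoint a x) x := by
  obtain ⟨x, -, hx⟩ := zorn_le_nonempty₀ {x | b ≤ x ∧ x ≤ c ∧ Disjoint a x}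
    (fun s hs hchain y hy => ⟨sSup s,
      ⟨(hs hy).1.trans (le_sSup hy), sSup_le fun z hz => (hs hz).2.1,
        (hchain.directedOn.disjoint_sSup_right).2 fun z hz => (hs hz).2.2⟩,
      fun z hz => le_sSup hz⟩) b ⟨le_rfl, hbc, hab⟩
  exact ⟨x, hx⟩

namespace Submodule

variable {A : Type*} [AddCommGroup A]

-- The inclusion `m • B ≤ B ⊓ m • T` is automatic once `B ≤ T`.
def IsPureIn (B T : Submodule ℤ A) : Prop := ∀ m : ℤ, B ⊓ m • T ≤ m • B

theorem exists_disjoint_sup_eq_of_disjoint_smul {p : ℤ} (hp : Prime p) {S D : Submodule ℤ A}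
    (hSD : S ≤ D) (hS : Disjoint S (p • D)) : ∃ E ≤ D, Disjoint S E ∧ S ⊔ E = D := by
  obtain ⟨E, ⟨hpDE, hED, hSE⟩, hmax⟩ :=
    exists_maximal_disjoint_of_le (smul_le_self_of_tower p D) hS
  refine ⟨E, hED, hSE, le_antisymm (sup_le hSD hED) fun d hd => ?_⟩
  by_cases hdE : d ∈ E
  · exact mem_sup_right hdE
  have hpd : p • d ∈ E := hpDE (smul_mem_pointwise_smul d p D hd)
  -- By maximality of `E`, the larger submodule `E ⊔ ℤ d` meets `S`.
  obtain ⟨s, hsS, hsEd, hs0⟩ : ∃ s ∈ S, s ∈ E ⊔ span ℤ {d} ∧ s ≠ 0 := by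
    by_contra! h
    exact hdE (hmax ⟨hpDE.trans le_sup_left, sup_le hED ((span_singleton_le_iff_mem _ _).2 hd),
      disjoint_def.2 h⟩ le_sup_left (mem_sup_right (mem_span_singleton_self d)))
  obtain ⟨e, he, _, hk, rfl⟩ := mem_sup.1 hsEd
  obtain ⟨k, rfl⟩ := mem_span_singleton.1 hk
  have hpk : ¬ p ∣ k := by
    rintro ⟨k, rfl⟩
    refine hs0 (disjoint_def.1 hSE _ hsS (E.add_mem he ?_))
    rw [mul_comm, mul_smul]
    exact E.smul_mem k hpd
  -- `k` is invertible modulo `p`, and `p • d ∈ E`.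
  obtain ⟨u, v, huv⟩ := hp.irreducible.coprime_iff_not_dvd.2 hpk
  have hd_eq : d = v • (e + k • d) - v • e + u • p • d := by
    rw [smul_add, add_sub_cancel_left, smul_smul, smul_smul, ← add_smul, add_comm, huv, one_smul]
  rw [hd_eq]
  exact add_mem (sub_mem (mem_sup_left (S.smul_mem v hsS)) (mem_sup_right (E.smul_mem v he)))
    (mem_sup_right (E.smul_mem u hpd))

theorem IsPureIn.smul {B T : Submodule ℤ A} (hB : B.IsPureIn T) (p : ℤ) :
    (p • B).IsPureIn (p • T) := fun m => by
  simpa only [smul_smul] using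
    (inf_le_inf_right _ (smul_le_self_of_tower p B)).trans (hB (m * p))

theorem IsPureIn.exists_compl_of_smul {p : ℤ} (hp : Prime p) {B T C : Submodule ℤ A}
    (hBT : B ≤ T) (hB : B.IsPureIn T) (hBC : Disjoint (p • B) C) (hBCT : p • B ⊔ C = p • T) :
    ∃ E ≤ T, Disjoint B E ∧ B ⊔ E = T := by
  set D := T ⊓ C.comap (DistribSMul.toLinearMap ℤ A p)
  have mem_D : ∀ x, x ∈ D ↔ x ∈ T ∧ p • x ∈ C := fun x => Iff.rfl
  have hBD : B ⊔ D = T := by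
    refine le_antisymm (sup_le hBT inf_le_left) fun t ht => ?_
    obtain ⟨_, ⟨b, hb, rfl⟩, c, hc, hbc⟩ :=
      mem_sup.1 (hBCT ▸ smul_mem_pointwise_smul t p T ht)
    change p • b + c = p • t at hbc
    have htb : t - b ∈ D := by
      refine (mem_D _).2 ⟨T.sub_mem ht (hBT hb), ?_⟩
      rwa [smul_sub, ← hbc, add_sub_cancel_left]
    simpa using add_mem (mem_sup_left hb) (mem_sup_right htb)
  -- Purity puts `B ⊓ p • D` inside `p • B`, while `p • D` lies in `C` by construction.
  have hBpD : Disjoint (B ⊓ D) (p • D) := by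
    refine disjoint_def.2 fun x hx ⟨d, hd, hdx⟩ => disjoint_def.1 hBC x ?_ (hdx ▸ hd.2)
    exact hB p ⟨hx.1, hdx ▸ smul_mem_pointwise_smul d p T hd.1⟩
  obtain ⟨E, hED, hBDE, hBDE_sup⟩ := exists_disjoint_sup_eq_of_disjoint_smul hp inf_le_right hBpD
  refine ⟨E, hED.trans inf_le_left, ?_, ?_⟩
  · rw [disjoint_iff, ← inf_eq_right.2 hED, ← inf_assoc]
    exact disjoint_iff.1 hBDE
  · rw [← hBD, ← hBDE_sup, ← sup_assoc, sup_inf_self]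

theorem IsPureIn.exists_compl_of_bounded {n : ℕ} (hn : 0 < n) {B T : Submodule ℤ A}
    (hBT : B ≤ T) (hB : B.IsPureIn T) (hnB : (n : ℤ) • B = ⊥) :
    ∃ E ≤ T, Disjoint B E ∧ B ⊔ E = T := by
  induction n using Nat.strong_induction_on generalizing B T with
  | _ n ih =>
  obtain rfl | hn1 := eq_or_ne n 1
  · rw [Nat.cast_one, one_smul] at hnB
    exact ⟨T, le_rfl, hnB ▸ disjoint_bot_left, hnB ▸ bot_sup_eq T⟩
  obtain ⟨p, hp, m, rfl⟩ := Nat.exists_prime_and_dvd hn1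
  have hm : 0 < m := Nat.pos_of_mul_pos_left hn
  obtain ⟨C, -, hBC, hBCT⟩ := ih m (lt_mul_left hm hp.one_lt) hm
    (smul_le_smul_left (p : ℤ) hBT) (hB.smul p) (by rw [smul_smul, ← Nat.cast_mul, mul_comm, hnB])
  exact hB.exists_compl_of_smul (Nat.prime_iff_prime_int.1 hp) hBT hBC hBCT

end Submodule

theorem Ideal.mem_jacobson_bot_iff_forall_exists_mul_one_sub {R : Type*} [Ring R] {x : R} :
    x ∈ jacobson ⊥ ↔ ∀ y, ∃ z, z * (1 - y * x) = 1 := by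
  refine mem_jacobson_iff.trans ⟨fun h y => ?_, fun h y => ?_⟩ <;> obtain ⟨z, hz⟩ := h (-y) <;>
    refine ⟨z, ?_⟩
  · rw [mem_bot, sub_eq_zero] at hz
    exact (by noncomm_ring : z * (1 - y * x) = z * -y * x + z).trans hz
  · rw [mem_bot, ← hz]
    noncomm_ring

namespace AddMonoid.End

variable {A : Type*} [AddCommGroup A]

theorem injective_of_forall_exists_apply_eq {φ : AddMonoid.End A}
    (hφ : ∀ a, ∃ v : AddMonoid.End A, v (φ a) = a) : Function.Injective φ := by
  refine (injective_iff_map_eq_zero φ).2 fun a ha => ?_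
  obtain ⟨v, hv⟩ := hφ a
  rw [← hv, ha, map_zero]

theorem isPureIn_range_of_forall_exists_apply_eq {φ : AddMonoid.End A}
    (hφ : ∀ a, ∃ v : AddMonoid.End A, v (φ a) = a) :
    (LinearMap.range (AddMonoidHom.toIntLinearMap φ)).IsPureIn ⊤ := by
  rintro m x ⟨⟨a, rfl⟩, b, -, hb⟩
  obtain ⟨v, hv⟩ := hφ a
  refine ⟨φ (v b), ⟨v b, rfl⟩, ?_⟩
  change m • b = φ a at hb
  change m • φ (v b) = φ a
  rw [← map_zsmul, ← map_zsmul, hb, hv]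

theorem exists_mul_eq_one_of_bijective {φ : AddMonoid.End A} (hφ : Function.Bijective φ) :
    ∃ ψ : AddMonoid.End A, ψ * φ = 1 :=
  ⟨(AddEquiv.ofBijective φ hφ).symm.toAddMonoidHom,
    AddMonoidHom.ext fun a => (AddEquiv.ofBijective φ hφ).symm_apply_apply a⟩

end AddMonoid.End

section FiniteTopology

attribute [local instance] finTopEnd

variable {A : Type*} [AddCommGroup A]

open Ideal

theorem mem_closure_finTopEnd_iff {S : Set (AddMonoid.End A)} {f : AddMonoid.End A} :
    f ∈ closure S ↔ ∀ s : Finset A, ∃ g ∈ S, Set.EqOn g f s := by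
  let _ : TopologicalSpace A := ⊥
  have : DiscreteTopology A := ⟨rfl⟩
  rw [mem_closure_iff_nhds, finTopEnd, nhds_induced, nhds_pi]
  simp only [nhds_discrete, Filter.mem_comap, Filter.mem_pi', Filter.mem_pure]
  constructor
  · intro h s
    obtain ⟨g, hg, hgS⟩ := h _ ⟨_, ⟨s, fun a => {f a}, fun a => rfl, subset_rfl⟩, subset_rfl⟩
    exact ⟨g, hgS, fun a ha => hg a ha⟩
  · rintro h t ⟨u, ⟨s, v, hfv, hsv⟩, hut⟩
    obtain ⟨g, hgS, hg⟩ := h s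
    refine ⟨g, hut (hsv fun a ha => ?_), hgS⟩
    simpa [hg ha] using hfv a

theorem mul_mem_closure_ideal {I : Ideal (AddMonoid.End A)} (h : AddMonoid.End A)
    {f : AddMonoid.End A} (hf : f ∈ closure (I : Set (AddMonoid.End A))) :
    h * f ∈ closure (I : Set (AddMonoid.End A)) := by
  rw [mem_closure_finTopEnd_iff] at hf ⊢
  intro s
  obtain ⟨g, hgI, hg⟩ := hf s
  exact ⟨h * g, I.mul_mem_left h hgI, fun a ha => congrArg h (hg ha)⟩

theorem exists_apply_one_sub_eq_of_mem_closure_jacobson {f : AddMonoid.End A}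
    (hf : f ∈ closure (jacobson (⊥ : Ideal (AddMonoid.End A)) : Set (AddMonoid.End A))) (a : A) :
    ∃ v : AddMonoid.End A, v ((1 - f) a) = a := by
  obtain ⟨g, hgJ, hg⟩ := mem_closure_finTopEnd_iff.1 hf {a}
  obtain ⟨v, hv⟩ := mem_jacobson_bot_iff_forall_exists_mul_one_sub.1 hgJ 1
  refine ⟨v, ?_⟩
  rw [one_mul] at hv
  change v (a - f a) = a
  rw [← hg (Finset.mem_coe.2 (Finset.mem_singleton_self a))]
  exact DFunLike.congr_fun hv a

theorem injective_one_sub_of_mem_closure_jacobson {f : AddMonoid.End A}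
    (hf : f ∈ closure (jacobson (⊥ : Ideal (AddMonoid.End A)) : Set (AddMonoid.End A))) :
    Function.Injective ⇑(1 - f) :=
  AddMonoid.End.injective_of_forall_exists_apply_eq
    (exists_apply_one_sub_eq_of_mem_closure_jacobson hf)

theorem surjective_one_sub_of_mem_closure_jacobson {n : ℕ} (hn : 0 < n)
    (hbound : ∀ a : A, n • a = 0) {f : AddMonoid.End A}
    (hf : f ∈ closure (jacobson (⊥ : Ideal (AddMonoid.End A)) : Set (AddMonoid.End A))) :
    Function.Surjective ⇑(1 - f) := by
  set B := LinearMap.range (AddMonoidHom.toIntLinearMap (1 - f))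
  have hB : B.IsPureIn ⊤ := AddMonoid.End.isPureIn_range_of_forall_exists_apply_eq
    (exists_apply_one_sub_eq_of_mem_closure_jacobson hf)
  have hnB : (n : ℤ) • B = ⊥ := by
    refine eq_bot_iff.2 fun x hx => ?_
    obtain ⟨b, -, rfl⟩ := (Submodule.mem_smul_pointwise_iff_exists _ _ _).1 hx
    rw [Submodule.mem_bot, natCast_zsmul]
    exact hbound b
  obtain ⟨E, -, hBE, hBE_sup⟩ := hB.exists_compl_of_bounded hn le_top hnB
  have hEB : IsCompl E B := ⟨hBE.symm, codisjoint_iff.2 (sup_comm B E ▸ hBE_sup)⟩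
  set π : AddMonoid.End A := (E.projection B hEB).toAddMonoidHom
  have hE : E = ⊥ := by
    refine eq_bot_iff.2 fun e he => ?_
    refine (injective_iff_map_eq_zero _).1
      (injective_one_sub_of_mem_closure_jacobson (mul_mem_closure_ideal π hf)) e ?_
    calc (1 - π * f) e = π e - π (f e) :=
          congrArg (· - π (f e)) (Submodule.projection_apply_of_mem_left hEB he).symm
      _ = π ((1 - f) e) := (map_sub π e (f e)).symm
      _ = 0 := Submodule.projection_apply_of_mem_right hEB ⟨e, rfl⟩
  rw [hE, sup_bot_eq] at hBE_sup
  exact LinearMap.range_eq_top.1 hBE_sup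

end FiniteTopology

theorem jacobson_closed_of_bounded {A : Type*} [AddCommGroup A]
    (n : ℕ) (hn : 0 < n) (hbound : ∀ a : A, n • a = 0) :
    @IsClosed _ (finTopEnd A)
      ((⊥ : Ideal (AddMonoid.End A)).jacobson : Set (AddMonoid.End A)) := by
  let _ : TopologicalSpace (AddMonoid.End A) := finTopEnd A
  refine isClosed_of_closure_subset fun f hf =>
    Ideal.mem_jacobson_bot_iff_forall_exists_mul_one_sub.2 fun h => ?_
  have hhf := mul_mem_closure_ideal h hf
  exact AddMonoid.End.exists_mul_eq_one_of_bijective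
    ⟨injective_one_sub_of_mem_closure_jacobson hhf,
      surjective_one_sub_of_mem_closure_jacobson hn hbound hhf⟩
end

section
/- If A is a free abelian group, then the Jacobson radical of End(A) is zero. -/
/-!
If `f` lies in the Jacobson radical, `φ` is a functional and `x` a vector, then for every scalar
`r` the endomorphism `1 + r (φ ⊗ x) f` has a left inverse `z`. Transporting `z` along `s ↦ s • x`
and `φ ∘ f` (the trick behind "`1 + ab` invertible iff `1 + ba` invertible") makes `1 + r φ (f x)`
a unit, so `φ (f x)` lies in the Jacobson radical of the scalars. For `ℤ` that radical is `0`,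
and on a free group the functionals separate points, so `f = 0`.
-/

open Ideal

theorem Int.jacobson_bot_eq_bot : (⊥ : Ideal ℤ).jacobson = ⊥ := by
  refine eq_bot_iff.2 fun a ha => ?_
  have h₁ := Int.isUnit_iff.1 (mem_jacobson_bot.1 ha 1)
  have h₂ := Int.isUnit_iff.1 (mem_jacobson_bot.1 ha (-1))
  rw [mem_bot]
  omega

namespace Module.End

variable {R M : Type*} [CommRing R] [AddCommGroup M] [Module R M]

theorem dual_apply_mem_jacobson_bot {f : Module.End R M}
    (hf : f ∈ (⊥ : Ideal (Module.End R M)).jacobson) (φ : Module.Dual R M) (x : M) :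
    φ (f x) ∈ (⊥ : Ideal R).jacobson := by
  refine mem_jacobson_bot.2 fun r => ?_
  obtain ⟨z, hz⟩ := mem_jacobson_iff.1 hf (r • φ.smulRight x)
  rw [mem_bot, sub_eq_zero] at hz
  have hzx : r • φ (f x) • z x + z x = x := by
    simpa using LinearMap.congr_fun hz x
  have hd : r * (φ (f x) * φ (f (z x))) + φ (f (z x)) = φ (f x) := by
    simpa using congrArg (φ ∘ f) hzx
  exact .of_mul_eq_one (1 - r * φ (f (z x))) (by linear_combination (-r) * hd)

theorem jacobson_bot_eq_bot [Module.Projective R M] (hR : (⊥ : Ideal R).jacobson = ⊥) :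
    (⊥ : Ideal (Module.End R M)).jacobson = ⊥ := by
  refine eq_bot_iff.2 fun f hf => mem_bot.2 <| LinearMap.ext fun x => ?_
  refine (Module.forall_dual_apply_eq_zero_iff R (f x)).1 fun φ => ?_
  simpa [hR] using dual_apply_mem_jacobson_bot hf φ x

end Module.End

theorem jacobson_eq_bot_of_free {A : Type*} [AddCommGroup A] [Module.Free ℤ A] :
    (⊥ : Ideal (AddMonoid.End A)).jacobson = ⊥ := by
  let e := (addMonoidEndRingEquivInt A).toRingHom
  have he : Function.Bijective e := (addMonoidEndRingEquivInt A).bijective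
  rw [← map_eq_bot_iff_of_injective he.1, map_jacobson_of_bijective he, Ideal.map_bot]
  exact Module.End.jacobson_bot_eq_bot Int.jacobson_bot_eq_bot
end

section
/- For an abelian p-group A, each of the ideals T(A[p^n]) = {α ∈ End(A) : α(A[p^n]) = 0} is closed in the finite topology on End(A); consequently End(A) with the Liebert topology is a complete topological ring. -/
/-- `liebertSet p A n` is `T(A[p^n]) = {α ∈ End A : α(A[p^n]) = 0}`. -/
def liebertSet (p : ℕ) (A : Type*) [AddCommGroup A] (n : ℕ) : Set (AddMonoid.End A) :=
  {α | ∀ a : A, p ^ n • a = 0 → α a = 0}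

/-!
Each `T(A[p^n])` is an intersection of the sets `{α | α a = 0}`, which are closed because
evaluation at `a` is continuous into the discrete group `A`.

The ideals `T(A[p^n])` form a ring basis of neighbourhoods of zero, giving the Liebert topology.
For completeness, let `F` be a Cauchy filter. Since `A` is a `p`-group, every `a` lies in some
`A[p^n]`, and on a set of `F` small for `T(A[p^n])` all endomorphisms agree at `a`; so `α a` is
eventually constant along `F`. These eventual values form an endomorphism, and it is a limit of `F`.
-/

open Filter

section Liebert

variable (p : ℕ) (A : Type*) [AddCommGroup A]

theorem liebertSet_antitone : Antitone (liebertSet p A) := by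
  intro m n hmn α hα a ha
  refine hα a ?_
  rw [← Nat.sub_add_cancel hmn, pow_add, mul_smul, ha, smul_zero]

theorem isClosed_liebertSet (n : ℕ) : @IsClosed _ (finTopEnd A) (liebertSet p A n) := by
  let _ : TopologicalSpace A := ⊥
  have : DiscreteTopology A := ⟨rfl⟩
  let _ := finTopEnd A
  have hev : ∀ a : A, Continuous fun α : AddMonoid.End A => α a :=
    fun a => (continuous_apply a).comp continuous_induced_dom
  simp only [liebertSet, Set.ofPred_forall]
  exact isClosed_iInter fun a => isClosed_iInter fun _ =>
    (isClosed_discrete {0}).preimage (hev a)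

def liebertSubgroup (n : ℕ) : AddSubgroup (AddMonoid.End A) where
  carrier := liebertSet p A n
  zero_mem' _ _ := rfl
  add_mem' {α β} hα hβ a ha := show α a + β a = 0 by rw [hα a ha, hβ a ha, add_zero]
  neg_mem' {α} hα a ha := show -α a = 0 by rw [hα a ha, neg_zero]

theorem ringSubgroupsBasis_liebertSubgroup : RingSubgroupsBasis (liebertSubgroup p A) where
  inter i j := ⟨max i j, le_inf (liebertSet_antitone p A (le_max_left i j))
    (liebertSet_antitone p A (le_max_right i j))⟩
  mul i := ⟨i, Set.mul_subset_iff.mpr fun α _ β hβ a ha =>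
    show α (β a) = 0 by rw [hβ a ha, map_zero]⟩
  leftMul x i := ⟨i, fun α hα a ha => show x (α a) = 0 by rw [hα a ha, map_zero]⟩
  rightMul x i := ⟨i, fun α hα a ha => hα (x a) (by rw [← map_nsmul, ha, map_zero])⟩

abbrev liebertTopology : TopologicalSpace (AddMonoid.End A) :=
  (ringSubgroupsBasis_liebertSubgroup p A).topology

theorem isTopologicalRing_liebertTopology :
    @IsTopologicalRing _ (liebertTopology p A) _ :=
  (ringSubgroupsBasis_liebertSubgroup p A).toRingFilterBasis.isTopologicalRing

abbrev liebertUniformity : UniformSpace (AddMonoid.End A) :=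
  letI := liebertTopology p A
  haveI := isTopologicalRing_liebertTopology p A
  IsTopologicalAddGroup.rightUniformSpace _

theorem isUniformAddGroup_liebertUniformity :
    @IsUniformAddGroup _ (liebertUniformity p A) _ :=
  letI := liebertTopology p A
  haveI := isTopologicalRing_liebertTopology p A
  isUniformAddGroup_of_addCommGroup

theorem hasBasis_nhds_zero_liebertTopology :
    (@nhds _ (liebertTopology p A) 0).HasBasis (fun _ => True) (liebertSet p A) :=
  (ringSubgroupsBasis_liebertSubgroup p A).hasBasis_nhds_zero

variable {p A}

theorem Cauchy.exists_forall_sub_mem_liebertSet {F : Filter (AddMonoid.End A)}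
    (hF : @Cauchy _ (liebertUniformity p A) F) (n : ℕ) :
    ∃ S ∈ F, ∀ α ∈ S, ∀ β ∈ S, β - α ∈ liebertSet p A n :=
  letI := liebertUniformity p A
  haveI := isUniformAddGroup_liebertUniformity p A
  ((hasBasis_nhds_zero_liebertTopology p A).uniformity_of_nhds_zero.cauchy_iff.mp hF).2 n trivial

theorem Cauchy.exists_eventually_apply_eq (hA : ∀ a : A, ∃ n : ℕ, p ^ n • a = 0)
    {F : Filter (AddMonoid.End A)} (hF : @Cauchy _ (liebertUniformity p A) F) (a : A) :
    ∃ c, ∀ᶠ α in F, α a = c := by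
  obtain ⟨n, hn⟩ := hA a
  obtain ⟨S, hSF, hS⟩ := hF.exists_forall_sub_mem_liebertSet n
  have := hF.1
  obtain ⟨α₀, hα₀⟩ := nonempty_of_mem hSF
  exact ⟨α₀ a, mem_of_superset hSF fun α hα => sub_eq_zero.mp (hS α₀ hα₀ α hα a hn)⟩

theorem completeSpace_liebertUniformity (hA : ∀ a : A, ∃ n : ℕ, p ^ n • a = 0) :
    @CompleteSpace _ (liebertUniformity p A) := by
  let _ := liebertUniformity p A
  refine ⟨fun {F} hF => ?_⟩
  have := hF.1
  choose f hf using hF.exists_eventually_apply_eq hA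
  let lim : AddMonoid.End A := AddMonoidHom.mk' f fun a b => by
    obtain ⟨α, hαa, hαb, hαab⟩ := ((hf a).and ((hf b).and (hf (a + b)))).exists
    rw [← hαa, ← hαb, ← hαab, map_add]
  refine ⟨lim, ((ringSubgroupsBasis_liebertSubgroup p A).hasBasis_nhds lim).ge_iff.mpr
    fun n _ => ?_⟩
  obtain ⟨S, hSF, hS⟩ := hF.exists_forall_sub_mem_liebertSet n
  refine mem_of_superset hSF fun β hβ a ha => ?_
  obtain ⟨α, hαS, hαa⟩ := nonempty_of_mem (inter_mem hSF (hf a))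
  show β a - f a = 0
  rw [← hαa]
  exact hS α hαS β hβ a ha

end Liebert

theorem liebert_ideals_closed_and_complete_general (p : ℕ)
    (A : Type*) [AddCommGroup A] (hA : ∀ a : A, ∃ n : ℕ, p ^ n • a = 0) :
    (∀ n : ℕ, @IsClosed _ (finTopEnd A) (liebertSet p A n)) ∧
    ∃ u : UniformSpace (AddMonoid.End A),
      @IsUniformAddGroup (AddMonoid.End A) u _ ∧
      @IsTopologicalRing (AddMonoid.End A) u.toTopologicalSpace _ ∧
      (∀ s : Set (AddMonoid.End A),
        s ∈ @nhds _ u.toTopologicalSpace 0 ↔ ∃ n : ℕ, liebertSet p A n ⊆ s) ∧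
      @CompleteSpace (AddMonoid.End A) u :=
  ⟨isClosed_liebertSet p A, liebertUniformity p A, isUniformAddGroup_liebertUniformity p A,
    isTopologicalRing_liebertTopology p A,
    fun _ => (hasBasis_nhds_zero_liebertTopology p A).mem_iff.trans (by simp only [true_and]),
    completeSpace_liebertUniformity hA⟩

theorem liebert_ideals_closed_and_complete (p : ℕ) (hp : p.Prime)
    (A : Type*) [AddCommGroup A] (hA : ∀ a : A, ∃ n : ℕ, p ^ n • a = 0) :
    (∀ n : ℕ, @IsClosed _ (finTopEnd A) (liebertSet p A n)) ∧
    ∃ u : UniformSpace (AddMonoid.End A),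
      @IsUniformAddGroup (AddMonoid.End A) u _ ∧
      @IsTopologicalRing (AddMonoid.End A) u.toTopologicalSpace _ ∧
      (∀ s : Set (AddMonoid.End A),
        s ∈ @nhds _ u.toTopologicalSpace 0 ↔ ∃ n : ℕ, liebertSet p A n ⊆ s) ∧
      @CompleteSpace (AddMonoid.End A) u :=
  liebert_ideals_closed_and_complete_general p A hA
end
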